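/- Let (C, C₋, C₊) be a Reedy category. Then every morphism (α, θ) : ([m], X) → ([n], Y) of ∫N^{-,+}(C) factors uniquely as a morphism of Γ₋ followed by a morphism of Γ₊: there is a unique triple consisting of an object ([l], X'), a morphism (σ, id) : ([m], X) → ([l], X') in Γ₋, and a morphism (δ, θ') : ([l], X') → ([n], Y) in Γ₊ whose composite is (α, θ). -/

import Mathlib

namespace ReedyPaper

open CategoryTheory

universe v₂ u₂ v₁ u₁ v u

variable {C : Type u} [Category.{v} C]

def IsIdMor {x y : C} (f : x ⟶ y) : Prop := ∃ h : x = y, f = eqToHom h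

structure ReedyStruct (C : Type u) [Category.{v} C] where
  neg : MorphismProperty C
  pos : MorphismProperty C
  neg_id : ∀ x : C, neg (𝟙 x)
  pos_id : ∀ x : C, pos (𝟙 x)
  neg_comp : ∀ {x y z : C} (f : x ⟶ y) (g : y ⟶ z), neg f → neg g → neg (f ≫ g)
  pos_comp : ∀ {x y z : C} (f : x ⟶ y) (g : y ⟶ z), pos f → pos g → pos (f ≫ g)
  factor_existsUnique : ∀ {x y : C} (f : x ⟶ y),
    ∃! t : Σ z : C, (x ⟶ z) × (z ⟶ y), neg t.2.1 ∧ pos t.2.2 ∧ t.2.1 ≫ t.2.2 = f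
  wf : WellFounded (fun x y : C =>
    (∃ f : x ⟶ y, pos f ∧ ¬ IsIdMor f) ∨ (∃ f : y ⟶ x, neg f ∧ ¬ IsIdMor f))

structure ChainObj (C : Type u) [Category.{v} C] where
  n : ℕ
  X : Fin (n + 1) ⥤ C

structure ChainHom (P Q : ChainObj C) where
  α : Fin (P.n + 1) →o Fin (Q.n + 1)
  θ : ∀ i : Fin (P.n + 1), P.X.obj i ⟶ Q.X.obj (α i)
  natural : ∀ {i j : Fin (P.n + 1)} (h : i ≤ j),
    P.X.map (homOfLE h) ≫ θ j = θ i ≫ Q.X.map (homOfLE (α.monotone h))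

theorem ChainHom.ext' {P Q : ChainObj C} {f g : ChainHom P Q}
    (hα : f.α = g.α) (hθ : HEq f.θ g.θ) : f = g := by
  cases f; cases g; cases hα; cases hθ; rfl

def ChainHom.id (P : ChainObj C) : ChainHom P P where
  α := OrderHom.id
  θ i := 𝟙 _
  natural h := by
    show P.X.map (homOfLE h) ≫ 𝟙 _ = 𝟙 _ ≫ P.X.map (homOfLE h)
    simp

def ChainHom.comp {P Q S : ChainObj C} (f : ChainHom P Q) (g : ChainHom Q S) :
    ChainHom P S where
  α := g.α.comp f.α
  θ i := f.θ i ≫ g.θ (f.α i)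
  natural {i j} h := by
    show P.X.map (homOfLE h) ≫ (f.θ j ≫ g.θ (f.α j)) =
      (f.θ i ≫ g.θ (f.α i)) ≫ S.X.map (homOfLE (g.α.monotone (f.α.monotone h)))
    rw [← Category.assoc, f.natural h, Category.assoc, g.natural (f.α.monotone h),
      ← Category.assoc]

instance : Category (ChainObj C) where
  Hom := ChainHom
  id := ChainHom.id
  comp := ChainHom.comp
  id_comp f := ChainHom.ext' rfl (heq_of_eq (funext fun i => Category.id_comp _))
  comp_id f := ChainHom.ext' rfl (heq_of_eq (funext fun i => Category.comp_id _))
  assoc f g h := ChainHom.ext' rfl (heq_of_eq (funext fun i => Category.assoc _ _ _))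

/-- The partial order on the hom-sets of `∫N(C)` (and of `∫N^{-,+}(C)`):
`(α, θ) ≤ (α', θ')` iff `α ≤ α'` pointwise and `θ'ᵢ = Y(α(i) ≤ α'(i)) ∘ θᵢ` for all `i`. -/
def ChainHom.le {P Q : ChainObj C} (f g : ChainHom P Q) : Prop :=
  (∀ i, f.α i ≤ g.α i) ∧
    ∀ (i : Fin (P.n + 1)) (h : f.α i ≤ g.α i), g.θ i = f.θ i ≫ Q.X.map (homOfLE h)

theorem ChainHom.le_comp_right {P Q S : ChainObj C} {f f' : P ⟶ Q} (g : Q ⟶ S)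
    (h : ChainHom.le f f') : ChainHom.le (f ≫ g) (f' ≫ g) := by
  refine ⟨fun i => g.α.monotone (h.1 i), fun i hi => ?_⟩
  show f'.θ i ≫ g.θ (f'.α i) = (f.θ i ≫ g.θ (f.α i)) ≫ S.X.map (homOfLE hi)
  rw [h.2 i (h.1 i), Category.assoc, g.natural (h.1 i), ← Category.assoc]
  rfl

theorem ChainHom.le_comp_left {P Q S : ChainObj C} (f : P ⟶ Q) {g g' : Q ⟶ S}
    (h : ChainHom.le g g') : ChainHom.le (f ≫ g) (f ≫ g') := by
  refine ⟨fun i => h.1 (f.α i), fun i hi => ?_⟩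
  show f.θ i ≫ g'.θ (f.α i) = (f.θ i ≫ g.θ (f.α i)) ≫ S.X.map (homOfLE hi)
  rw [h.2 (f.α i) (h.1 (f.α i)), ← Category.assoc]
  rfl

/-- Objects of `∫N^{-,+}(C)`: chains all of whose morphisms lie in `C₋`. -/
structure NegObj (R : ReedyStruct C) where
  n : ℕ
  X : Fin (n + 1) ⥤ C
  negMap : ∀ {i j : Fin (n + 1)} (h : i ≤ j), R.neg (X.map (homOfLE h))

variable {R : ReedyStruct C}

/-- The underlying object of `∫N(C)`. -/
def NegObj.chain (P : NegObj R) : ChainObj C := ⟨P.n, P.X⟩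

/-- Morphisms of `∫N^{-,+}(C)`: morphisms of `∫N(C)` all of whose components lie in `C₊`. -/
def NegHomT (P Q : NegObj R) : Type v :=
  { f : P.chain ⟶ Q.chain // ∀ i, R.pos (f.θ i) }

def NegHomT.id (P : NegObj R) : NegHomT P P := ⟨𝟙 P.chain, fun _ => R.pos_id _⟩

def NegHomT.comp {P Q S : NegObj R} (f : NegHomT P Q) (g : NegHomT Q S) : NegHomT P S :=
  ⟨f.1 ≫ g.1, fun i => by
    show R.pos (f.1.θ i ≫ g.1.θ (f.1.α i))
    exact R.pos_comp _ _ (f.2 i) (g.2 _)⟩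

theorem NegHomT.id_comp {P Q : NegObj R} (f : NegHomT P Q) : (NegHomT.id P).comp f = f := by
  apply Subtype.ext
  show 𝟙 P.chain ≫ f.1 = f.1
  exact Category.id_comp f.1

theorem NegHomT.comp_id {P Q : NegObj R} (f : NegHomT P Q) : f.comp (NegHomT.id Q) = f := by
  apply Subtype.ext
  show f.1 ≫ 𝟙 Q.chain = f.1
  exact Category.comp_id f.1

theorem NegHomT.comp_assoc {P Q S T : NegObj R} (f : NegHomT P Q) (g : NegHomT Q S)
    (h : NegHomT S T) : (f.comp g).comp h = f.comp (g.comp h) := by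
  apply Subtype.ext
  show (f.1 ≫ g.1) ≫ h.1 = f.1 ≫ (g.1 ≫ h.1)
  exact Category.assoc f.1 g.1 h.1

/-- The category `∫N^{-,+}(C)`. -/
instance : Category (NegObj R) where
  Hom := NegHomT
  id := NegHomT.id
  comp := NegHomT.comp
  id_comp := NegHomT.id_comp
  comp_id := NegHomT.comp_id
  assoc := NegHomT.comp_assoc

/-- The order on the hom-sets of `∫N^{-,+}(C)`. -/
def NegHom.le {P Q : NegObj R} (f g : P ⟶ Q) : Prop := ChainHom.le f.1 g.1

/-- The equivalence relation `∼` on the hom-sets of `∫N^{-,+}(C)`: the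
symmetric-transitive closure of `≤`. -/
def NegHom.equiv {P Q : NegObj R} (f g : P ⟶ Q) : Prop :=
  Relation.EqvGen (fun a b : P ⟶ Q => NegHom.le a b) f g

theorem NegHom.le_comp_right {P Q S : NegObj R} {f f' : P ⟶ Q} (g : Q ⟶ S)
    (h : NegHom.le f f') : NegHom.le (f ≫ g) (f' ≫ g) :=
  ChainHom.le_comp_right g.1 h

theorem NegHom.le_comp_left {P Q S : NegObj R} (f : P ⟶ Q) {g g' : Q ⟶ S}
    (h : NegHom.le g g') : NegHom.le (f ≫ g) (f ≫ g') :=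
  ChainHom.le_comp_left f.1 h

/-- Identity-reflectingness of a chain. -/
def NegObj.IdRefl (P : NegObj R) : Prop :=
  ∀ {i j : Fin (P.n + 1)} (h : i ≤ j), IsIdMor (P.X.map (homOfLE h)) → i = j

/-- Objects of `∫N^{--,+}_+(C)`: identity-reflecting chains in `C₋`. -/
structure StrictObj (R : ReedyStruct C) where
  toNegObj : NegObj R
  idRefl : toNegObj.IdRefl

/-- Morphisms of `∫N^{--,+}_+(C)`: morphisms of `∫N^{-,+}(C)` with `α` injective. -/
def StrictHomT (P Q : StrictObj R) : Type v :=
  { f : P.toNegObj ⟶ Q.toNegObj // Function.Injective f.1.α }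

def StrictHomT.id (P : StrictObj R) : StrictHomT P P :=
  ⟨𝟙 P.toNegObj, fun _ _ h => h⟩

def StrictHomT.comp {P Q S : StrictObj R} (f : StrictHomT P Q) (g : StrictHomT Q S) :
    StrictHomT P S :=
  ⟨f.1 ≫ g.1, fun _ _ h => f.2 (g.2 h)⟩

/-- The category `∫N^{--,+}_+(C)`. -/
instance : Category (StrictObj R) where
  Hom := StrictHomT
  id := StrictHomT.id
  comp := StrictHomT.comp
  id_comp f := Subtype.ext (Category.id_comp f.1)
  comp_id f := Subtype.ext (Category.comp_id f.1)
  assoc f g h := Subtype.ext (Category.assoc f.1 g.1 h.1)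

/-- The order on the hom-sets of `∫N^{--,+}_+(C)`. -/
def StrictHom.le {P Q : StrictObj R} (f g : P ⟶ Q) : Prop := NegHom.le f.1 g.1

/-- The equivalence relation `∼` on the hom-sets of `∫N^{--,+}_+(C)`. -/
def StrictHom.equiv {P Q : StrictObj R} (f g : P ⟶ Q) : Prop :=
  Relation.EqvGen (fun a b : P ⟶ Q => StrictHom.le a b) f g

theorem StrictHom.le_comp_right {P Q S : StrictObj R} {f f' : P ⟶ Q} (g : Q ⟶ S)
    (h : StrictHom.le f f') : StrictHom.le (f ≫ g) (f' ≫ g) :=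
  NegHom.le_comp_right g.1 h

theorem StrictHom.le_comp_left {P Q S : StrictObj R} (f : P ⟶ Q) {g g' : Q ⟶ S}
    (h : StrictHom.le g g') : StrictHom.le (f ≫ g) (f ≫ g') :=
  NegHom.le_comp_left f.1 h

/-- Objects of `Down_*(C)`: the same as those of `∫N^{-,+}(C)`. -/
structure DownStar (R : ReedyStruct C) where
  obj : NegObj R

/-- The category `Down_*(C)`: hom-sets are the quotients of those of `∫N^{-,+}(C)`
by the symmetric-transitive closure of `≤`. -/
instance : Category (DownStar R) where
  Hom P Q := Quot (fun f g : P.obj ⟶ Q.obj => NegHom.le f g)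
  id P := Quot.mk _ (𝟙 P.obj)
  comp {P Q S} f g :=
    Quot.lift
      (fun f' => Quot.lift (fun g' => Quot.mk _ (f' ≫ g'))
        (fun _ _ hg => Quot.sound (NegHom.le_comp_left f' hg)) g)
      (fun f₁ f₂ hf => Quot.inductionOn g (fun g' =>
        Quot.sound (NegHom.le_comp_right g' hf))) f
  id_comp f := Quot.inductionOn f fun f' => congrArg (Quot.mk _) (Category.id_comp f')
  comp_id f := Quot.inductionOn f fun f' => congrArg (Quot.mk _) (Category.comp_id f')
  assoc f g h :=
    Quot.inductionOn f fun f' => Quot.inductionOn g fun g' => Quot.inductionOn h fun h' =>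
      congrArg (Quot.mk _) (Category.assoc f' g' h')

/-- Objects of `Down(C)`: the same as those of `∫N^{--,+}_+(C)`. -/
structure Down (R : ReedyStruct C) where
  obj : StrictObj R

/-- The category `Down(C)`: hom-sets are the quotients of those of `∫N^{--,+}_+(C)`
by the symmetric-transitive closure of `≤`. -/
instance : Category (Down R) where
  Hom P Q := Quot (fun f g : P.obj ⟶ Q.obj => StrictHom.le f g)
  id P := Quot.mk _ (𝟙 P.obj)
  comp {P Q S} f g :=
    Quot.lift
      (fun f' => Quot.lift (fun g' => Quot.mk _ (f' ≫ g'))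
        (fun _ _ hg => Quot.sound (StrictHom.le_comp_left f' hg)) g)
      (fun f₁ f₂ hf => Quot.inductionOn g (fun g' =>
        Quot.sound (StrictHom.le_comp_right g' hf))) f
  id_comp f := Quot.inductionOn f fun f' => congrArg (Quot.mk _) (Category.id_comp f')
  comp_id f := Quot.inductionOn f fun f' => congrArg (Quot.mk _) (Category.comp_id f')
  assoc f g h :=
    Quot.inductionOn f fun f' => Quot.inductionOn g fun g' => Quot.inductionOn h fun h' =>
      congrArg (Quot.mk _) (Category.assoc f' g' h')

/-- The quotient functor `∫N^{-,+}(C) → Down_*(C)`. -/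
def qStar (R : ReedyStruct C) : NegObj R ⥤ DownStar R where
  obj P := ⟨P⟩
  map f := Quot.mk _ f
  map_id _ := rfl
  map_comp _ _ := rfl

/-- The inclusion functor `Down(C) → Down_*(C)`. -/
def downInclusion (R : ReedyStruct C) : Down R ⥤ DownStar R where
  obj P := ⟨P.obj.toNegObj⟩
  map {P Q} f :=
    Quot.lift (fun f' : P.obj ⟶ Q.obj => Quot.mk _ f'.1) (fun _ _ h => Quot.sound h) f
  map_id _ := rfl
  map_comp {P Q S} f g := by
    induction f using Quot.ind
    induction g using Quot.ind
    rfl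

/-- The last-component functor `∫N(C) → C`. -/
def lastChain : ChainObj C ⥤ C where
  obj P := P.X.obj (Fin.last P.n)
  map {P Q} f := f.θ (Fin.last P.n) ≫ Q.X.map (homOfLE (Fin.le_last (f.α (Fin.last P.n))))
  map_id P := by
    show 𝟙 (P.X.obj (Fin.last P.n)) ≫ P.X.map (homOfLE (Fin.le_last (Fin.last P.n))) = 𝟙 _
    rw [Category.id_comp]
    exact P.X.map_id _
  map_comp {P Q S} f g := by
    show (f.θ (Fin.last P.n) ≫ g.θ (f.α (Fin.last P.n))) ≫
        S.X.map (homOfLE (Fin.le_last (g.α (f.α (Fin.last P.n))))) =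
      (f.θ (Fin.last P.n) ≫ Q.X.map (homOfLE (Fin.le_last (f.α (Fin.last P.n))))) ≫
        g.θ (Fin.last Q.n) ≫ S.X.map (homOfLE (Fin.le_last (g.α (Fin.last Q.n))))
    rw [Category.assoc, Category.assoc, ← Category.assoc (Q.X.map _),
      g.natural (Fin.le_last (f.α (Fin.last P.n))), Category.assoc, ← Functor.map_comp,
      homOfLE_comp]

theorem lastChain_eq_of_le {P Q : ChainObj C} {f g : P ⟶ Q} (h : ChainHom.le f g) :
    lastChain.map f = lastChain.map g := by
  show f.θ (Fin.last P.n) ≫ Q.X.map (homOfLE (Fin.le_last (f.α (Fin.last P.n)))) =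
    g.θ (Fin.last P.n) ≫ Q.X.map (homOfLE (Fin.le_last (g.α (Fin.last P.n))))
  rw [h.2 (Fin.last P.n) (h.1 (Fin.last P.n)), Category.assoc, ← Functor.map_comp,
    homOfLE_comp]

/-- The forgetful functor `∫N^{-,+}(C) → ∫N(C)`. -/
def negForget (R : ReedyStruct C) : NegObj R ⥤ ChainObj C where
  obj P := P.chain
  map f := f.1
  map_id _ := rfl
  map_comp _ _ := rfl

/-- The last-component functor `∫N^{-,+}(C) → C`. -/
def lastNeg (R : ReedyStruct C) : NegObj R ⥤ C := negForget R ⋙ lastChain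

/-- The forgetful functor `∫N^{--,+}_+(C) → ∫N^{-,+}(C)`. -/
def strictForget (R : ReedyStruct C) : StrictObj R ⥤ NegObj R where
  obj P := P.toNegObj
  map f := f.1
  map_id _ := rfl
  map_comp _ _ := rfl

/-- The last-component functor `∫N^{--,+}_+(C) → C`. -/
def lastStrict (R : ReedyStruct C) : StrictObj R ⥤ C := strictForget R ⋙ lastNeg R

/-- The last-component functor `Down_*(C) → C`. -/
def lastDownStar (R : ReedyStruct C) : DownStar R ⥤ C where
  obj P := (lastNeg R).obj P.obj
  map {P Q} f :=
    Quot.lift (fun f' : P.obj ⟶ Q.obj => (lastNeg R).map f')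
      (fun _ _ h => lastChain_eq_of_le h) f
  map_id P := (lastNeg R).map_id P.obj
  map_comp {P Q S} f g := by
    induction f using Quot.ind
    induction g using Quot.ind
    exact (lastNeg R).map_comp _ _

/-- The last-component functor `Down(C) → C`. -/
def lastDown (R : ReedyStruct C) : Down R ⥤ C where
  obj P := (lastStrict R).obj P.obj
  map {P Q} f :=
    Quot.lift (fun f' : P.obj ⟶ Q.obj => (lastStrict R).map f')
      (fun _ _ h => lastChain_eq_of_le h) f
  map_id P := (lastStrict R).map_id P.obj
  map_comp {P Q S} f g := by
    induction f using Quot.ind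
    induction g using Quot.ind
    exact (lastStrict R).map_comp _ _

/-- The wide subcategory `Γ₋` of `∫N^{-,+}(C)`: morphisms of the form
`(σ, id) : ([m], X ∘ σ) → ([n], X)` with `σ` surjective, i.e. morphisms whose simplicial
component is surjective and all of whose components are identities. -/
def GammaNeg (R : ReedyStruct C) {P Q : NegObj R} (f : P ⟶ Q) : Prop :=
  Function.Surjective f.1.α ∧ ∀ i, IsIdMor (f.1.θ i)

/-- The wide subcategory `Γ₊` of `∫N^{-,+}(C)`: morphisms `(δ, θ)` with `δ` injective. -/
def GammaPos (R : ReedyStruct C) {P Q : NegObj R} (f : P ⟶ Q) : Prop :=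
  Function.Injective f.1.α

/-- Whiskering (precomposition) with `lastF` is bijective on natural transformations
between functors out of `C`. -/
def WhiskerUnique {Γ : Type u₁} [Category.{v₁} Γ] (lastF : Γ ⥤ C) : Prop :=
  ∀ {D : Type u₂} [Category.{v₂} D] (F G : C ⥤ D)
    (ε : lastF ⋙ F ⟶ lastF ⋙ G), ∃! ε' : F ⟶ G, Functor.whiskerLeft lastF ε' = ε

/-- `lastF : Γ ⥤ C` is a weak 1-localization of `Γ` at the `last`-weak equivalences
(the morphisms sent by `lastF` to identities). -/
def IsWeakLocalizationAtLastWeq {Γ : Type u₁} [Category.{v₁} Γ] (lastF : Γ ⥤ C) : Prop :=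
  (∀ {P Q : Γ} (f : P ⟶ Q), IsIdMor (lastF.map f) → IsIso (lastF.map f)) ∧
  (∀ {E : Type u₂} [Category.{v₂} E] (G : Γ ⥤ E),
    (∀ {P Q : Γ} (f : P ⟶ Q), IsIdMor (lastF.map f) → IsIso (G.map f)) →
    ∃ H : C ⥤ E, Nonempty (lastF ⋙ H ≅ G)) ∧
  (∀ {E : Type u₂} [Category.{v₂} E] (H H' : C ⥤ E) (θ : lastF ⋙ H ≅ lastF ⋙ H'),
    ∃! θ' : H ≅ H', Functor.isoWhiskerLeft lastF θ' = θ)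

/-!
Write `α = δ ∘ σ` for the unique surjection–injection factorization of `α` in `Δ`. Over a fibre
of `α` the chain `X` is constant: for `i ≤ j` with `α i = α j`, both `(X(i ≤ j), θ_j)` and
`(id, θ_i)` are Reedy factorizations of `X(i ≤ j) ≫ θ_j = θ_i`, so `X(i ≤ j)` is an identity.
Hence `X = X' ∘ σ` with `X' = X ∘ s` for the least section `s` of `σ`, and `(α, θ)` is
`(σ, id)` followed by `(δ, θ ∘ s)`. Conversely, in any such factorization the simplicial parts
are forced by uniqueness in `Δ`; a `Γ₋`-morphism out of `([m], X)` is determined by its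
simplicial part, and it is an epimorphism, which determines the `Γ₊`-part.
-/

theorem IsIdMor.eq {x y : C} {f g : x ⟶ y} (hf : IsIdMor f) (hg : IsIdMor g) : f = g := by
  obtain ⟨rfl, rfl⟩ := hf
  obtain ⟨_, rfl⟩ := hg
  rfl

theorem ReedyStruct.pos_of_isIdMor (R : ReedyStruct C) {x y : C} {f : x ⟶ y}
    (hf : IsIdMor f) : R.pos f := by
  obtain ⟨rfl, rfl⟩ := hf
  exact R.pos_id x

theorem ReedyStruct.isIdMor_of_neg_of_pos_comp (R : ReedyStruct C) {x y z : C}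
    {u : x ⟶ y} {v : y ⟶ z} (hu : R.neg u) (hv : R.pos v) (huv : R.pos (u ≫ v)) :
    IsIdMor u := by
  obtain ⟨t, -, huniq⟩ := R.factor_existsUnique (u ≫ v)
  have h := (huniq ⟨x, 𝟙 x, u ≫ v⟩ ⟨R.neg_id x, huv, Category.id_comp _⟩).trans
    (huniq ⟨y, u, v⟩ ⟨hu, hv, rfl⟩).symm
  obtain ⟨rfl, hpair⟩ := Sigma.mk.inj_iff.mp h
  exact ⟨rfl, (congrArg Prod.fst (eq_of_heq hpair)).symm⟩

theorem map_homOfLE_of_eq {J : Type*} [Preorder J] (F : J ⥤ C) {a b : J} (h : a ≤ b)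
    (hab : a = b) : F.map (homOfLE h) = eqToHom (congrArg F.obj hab) := by
  subst hab
  simp

theorem functor_eq_of_isIdMor {J : Type*} [Category J] {F G : J ⥤ C} (η : F ⟶ G)
    (hη : ∀ j, IsIdMor (η.app j)) : F = G := by
  choose hobj happ using hη
  refine CategoryTheory.Functor.ext hobj fun j j' u => ?_
  have hnat := η.naturality u
  rw [happ, happ] at hnat
  rw [← Category.assoc, ← hnat]
  simp

section LeastPreimage

variable {A B : Type*} [ConditionallyCompleteLinearOrderBot A]

noncomputable def leastPreimage (σ : A → B) (b : B) : A := sInf (σ ⁻¹' {b})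

theorem apply_leastPreimage [WellFoundedLT A] {σ : A → B} (hσ : Function.Surjective σ)
    (b : B) : σ (leastPreimage σ b) = b :=
  csInf_mem (hσ b)

theorem leastPreimage_apply_le (σ : A → B) (a : A) : leastPreimage σ (σ a) ≤ a :=
  csInf_le' rfl

theorem monotone_leastPreimage [WellFoundedLT A] [PartialOrder B] {σ : A → B}
    (hσ : Monotone σ) (hσ' : Function.Surjective σ) : Monotone (leastPreimage σ) := by
  intro b b' hbb'
  by_contra hlt
  have hle := hσ (not_le.mp hlt).le
  rw [apply_leastPreimage hσ', apply_leastPreimage hσ'] at hle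
  obtain rfl := le_antisymm hbb' hle
  exact hlt le_rfl

theorem functor_eq_of_comp_eq_of_surjective [WellFoundedLT A] [PartialOrder B] {σ : A → B}
    (hσ : Monotone σ) (hσ' : Function.Surjective σ) {X Y : B ⥤ C}
    (h : hσ.functor ⋙ X = hσ.functor ⋙ Y) : X = Y := by
  have hs : (monotone_leastPreimage hσ hσ').functor ⋙ hσ.functor = 𝟭 B :=
    CategoryTheory.Functor.ext (apply_leastPreimage hσ') fun _ _ _ => Subsingleton.elim _ _
  simpa only [← Functor.assoc, hs, Functor.id_comp] using
    congrArg ((monotone_leastPreimage hσ hσ').functor ⋙ ·) h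

end LeastPreimage

theorem exists_surjective_injective_factorization {A B : Type*} [Preorder A] [Fintype A]
    [Nonempty A] [LinearOrder B] (α : A →o B) :
    ∃ (l : ℕ) (σ : A →o Fin (l + 1)) (δ : Fin (l + 1) →o B),
      Function.Surjective σ ∧ Function.Injective δ ∧ ∀ a, δ (σ a) = α a := by
  classical
  set S := Finset.univ.image α
  have hS : S.card = S.card - 1 + 1 :=
    (Nat.succ_pred_eq_of_pos (Finset.univ_nonempty.image α).card_pos).symm
  have hmem : ∀ a, α a ∈ S := fun a => Finset.mem_image_of_mem α (Finset.mem_univ a)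
  set e := S.orderIsoOfFin hS
  refine ⟨S.card - 1, ⟨fun a => e.symm ⟨α a, hmem a⟩, fun a b h => e.symm.monotone (α.monotone h)⟩,
    ⟨fun k => e k, fun k k' h => e.monotone h⟩, fun k => ?_,
    fun k k' h => e.injective (Subtype.ext h),
    fun a => congrArg Subtype.val (e.apply_symm_apply _)⟩
  obtain ⟨a, -, ha⟩ := Finset.mem_image.mp (e k).2
  exact ⟨a, e.symm_apply_eq.mpr (Subtype.ext ha)⟩

theorem surjective_strictMono_factorization_unique {A B : Type*} [Preorder B] {l₁ l₂ : ℕ}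
    {σ₁ : A → Fin (l₁ + 1)} {δ₁ : Fin (l₁ + 1) → B} {σ₂ : A → Fin (l₂ + 1)}
    {δ₂ : Fin (l₂ + 1) → B} (hσ₁ : Function.Surjective σ₁) (hδ₁ : StrictMono δ₁)
    (hσ₂ : Function.Surjective σ₂) (hδ₂ : StrictMono δ₂) (h : ∀ a, δ₁ (σ₁ a) = δ₂ (σ₂ a)) :
    l₁ = l₂ ∧ ∀ a, (σ₁ a : ℕ) = σ₂ a := by
  have hrange : Set.range δ₁ = Set.range δ₂ := by
    rw [← hσ₁.range_comp, ← hσ₂.range_comp]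
    exact congrArg Set.range (funext h)
  obtain rfl : l₁ = l₂ := Nat.succ_injective <| Fin.equiv_iff_eq.mp
    ⟨(Equiv.ofInjective δ₁ hδ₁.injective).trans
      ((Equiv.setCongr hrange).trans (Equiv.ofInjective δ₂ hδ₂.injective).symm)⟩
  obtain rfl : δ₁ = δ₂ := (hδ₁.range_inj hδ₂).mp hrange
  exact ⟨rfl, fun a => congrArg Fin.val (hδ₁.injective (h a))⟩

theorem ChainHom.ext_eqToHom {P Q : ChainObj C} {f g : ChainHom P Q} (hα : ∀ i, f.α i = g.α i)
    (hθ : ∀ i, g.θ i = f.θ i ≫ eqToHom (congrArg Q.X.obj (hα i))) : f = g := by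
  obtain ⟨fα, fθ, _⟩ := f
  obtain ⟨gα, gθ, _⟩ := g
  obtain rfl : fα = gα := OrderHom.ext _ _ (funext hα)
  obtain rfl : fθ = gθ := funext fun i => by simpa using (hθ i).symm
  rfl

theorem ChainHom.θ_eq_of_eq {P Q : ChainObj C} {f g : ChainHom P Q} (h : f = g)
    (i : Fin (P.n + 1)) :
    ∃ e : f.α i = g.α i, g.θ i = f.θ i ≫ eqToHom (congrArg Q.X.obj e) := by
  subst h
  exact ⟨rfl, by simp⟩

def ChainHom.natTrans {P Q : ChainObj C} (f : ChainHom P Q) :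
    P.X ⟶ f.α.monotone.functor ⋙ Q.X where
  app := f.θ
  naturality i j u := by
    rw [Subsingleton.elim u (homOfLE (leOfHom u))]
    exact f.natural (leOfHom u)

def ChainHom.ofNatTrans {P Q : ChainObj C} (α : Fin (P.n + 1) →o Fin (Q.n + 1))
    (η : P.X ⟶ α.monotone.functor ⋙ Q.X) : ChainHom P Q where
  α := α
  θ := η.app
  natural h := η.naturality (homOfLE h)

theorem isIdMor_map_of_α_eq {P Q : NegObj R} (f : P ⟶ Q) {i j : Fin (P.n + 1)} (hij : i ≤ j)
    (hα : f.1.α i = f.1.α j) : IsIdMor (P.X.map (homOfLE hij)) := by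
  refine R.isIdMor_of_neg_of_pos_comp (P.negMap hij) (f.2 j) ?_
  have hnat : P.X.map (homOfLE hij) ≫ f.1.θ j = _ := f.1.natural hij
  rw [hnat, map_homOfLE_of_eq _ _ hα]
  exact R.pos_comp _ _ (f.2 i) (R.pos_of_isIdMor ⟨_, rfl⟩)

theorem GammaNeg.functor_eq {P M : NegObj R} {g : P ⟶ M} (hg : GammaNeg R g) :
    g.1.α.monotone.functor ⋙ M.X = P.X :=
  (functor_eq_of_isIdMor g.1.natTrans hg.2).symm

theorem GammaNeg.epi {P M : NegObj R} {g : P ⟶ M} (hg : GammaNeg R g) : Epi g := by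
  refine ⟨fun {Q} u v huv => ?_⟩
  have hα : ∀ k, u.1.α k = v.1.α k := hg.1.forall.2 fun i => congrArg (fun w => w.1.α i) huv
  refine Subtype.ext (ChainHom.ext_eqToHom hα (hg.1.forall.2 fun i => ?_))
  obtain ⟨e, he⟩ := ChainHom.θ_eq_of_eq (congrArg Subtype.val huv) i
  obtain ⟨_, hgi⟩ := hg.2 i
  have he' : g.1.θ i ≫ v.1.θ (g.1.α i) = g.1.θ i ≫ u.1.θ (g.1.α i) ≫ eqToHom _ :=
    he.trans (Category.assoc _ _ _)
  rw [hgi] at he'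
  exact (cancel_epi _).mp he'

theorem GammaNeg.sigma_eq_of_α_eq {P M₁ M₂ : NegObj R} {g₁ : P ⟶ M₁} {g₂ : P ⟶ M₂}
    (hg₁ : GammaNeg R g₁) (hg₂ : GammaNeg R g₂) (hn : M₁.n = M₂.n)
    (hα : ∀ i, (g₁.1.α i : ℕ) = g₂.1.α i) :
    (⟨M₁, g₁⟩ : Σ M : NegObj R, P ⟶ M) = ⟨M₂, g₂⟩ := by
  have hX₁ := hg₁.functor_eq
  have hX₂ := hg₂.functor_eq
  obtain ⟨n, X₁, _⟩ := M₁
  obtain ⟨n₂, X₂, _⟩ := M₂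
  obtain rfl : n = n₂ := hn
  obtain ⟨⟨α₁, θ₁, _⟩, _⟩ := g₁
  obtain ⟨⟨α₂, θ₂, _⟩, _⟩ := g₂
  obtain rfl : α₁ = α₂ := OrderHom.ext _ _ (funext fun i => Fin.ext (hα i))
  obtain rfl : X₁ = X₂ :=
    functor_eq_of_comp_eq_of_surjective α₁.monotone hg₁.1 (hX₁.trans hX₂.symm)
  obtain rfl : θ₁ = θ₂ := funext fun i => (hg₁.2 i).eq (hg₂.2 i)
  rfl

/-- The paper's `(σ, id) : ([m], X ∘ σ) → ([n], X)`. -/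
def homOfFunctorEq {P M : NegObj R} (σ : Fin (P.n + 1) →o Fin (M.n + 1))
    (hX : σ.monotone.functor ⋙ M.X = P.X) : P ⟶ M :=
  ⟨ChainHom.ofNatTrans (P := P.chain) (Q := M.chain) σ (eqToHom hX.symm), fun i =>
    R.pos_of_isIdMor ⟨_, eqToHom_app hX.symm i⟩⟩

theorem gammaNeg_homOfFunctorEq {P M : NegObj R} {σ : Fin (P.n + 1) →o Fin (M.n + 1)}
    (hσ : Function.Surjective σ) (hX : σ.monotone.functor ⋙ M.X = P.X) :
    GammaNeg R (homOfFunctorEq σ hX) :=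
  ⟨hσ, fun i => ⟨_, eqToHom_app hX.symm i⟩⟩

def NegObj.restrict (P : NegObj R) {l : ℕ} (s : Fin (l + 1) →o Fin (P.n + 1)) : NegObj R where
  n := l
  X := s.monotone.functor ⋙ P.X
  negMap h := P.negMap (s.monotone h)

def restrictHom {P Q : NegObj R} (f : P ⟶ Q) {l : ℕ} (s : Fin (l + 1) →o Fin (P.n + 1)) :
    P.restrict s ⟶ Q :=
  ⟨{ α := f.1.α.comp s
     θ := fun k => f.1.θ (s k)
     natural := fun h => f.1.natural (s.monotone h) }, fun k => f.2 (s k)⟩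

theorem exists_gammaNeg_gammaPos_factorization {P Q : NegObj R} (f : P ⟶ Q) :
    ∃ (M : NegObj R) (g : P ⟶ M) (h : M ⟶ Q), GammaNeg R g ∧ GammaPos R h ∧ g ≫ h = f := by
  obtain ⟨l, σ, δ, hσ, hδ, hf⟩ : ∃ (l : ℕ) (σ : Fin (P.n + 1) →o Fin (l + 1))
      (δ : Fin (l + 1) →o Fin (Q.n + 1)), Function.Surjective σ ∧ Function.Injective δ ∧
        ∀ i, δ (σ i) = f.1.α i :=
    exists_surjective_injective_factorization _
  let s : Fin (l + 1) →o Fin (P.n + 1) :=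
    ⟨leastPreimage σ, monotone_leastPreimage σ.monotone hσ⟩
  have hσs : ∀ k, σ (s k) = k := apply_leastPreimage hσ
  have hsσ : ∀ i, s (σ i) ≤ i := leastPreimage_apply_le σ
  have hfiber : ∀ i, f.1.α (s (σ i)) = f.1.α i := fun i =>
    (hf _).symm.trans ((congrArg δ (hσs _)).trans (hf i))
  have hid : ∀ i, IsIdMor (P.X.map (homOfLE (hsσ i))) := fun i =>
    isIdMor_map_of_α_eq f _ (hfiber i)
  have hX : σ.monotone.functor ⋙ s.monotone.functor ⋙ P.X = P.X :=
    functor_eq_of_isIdMor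
      { app := fun i => P.X.map (homOfLE (hsσ i))
        naturality := fun _ _ _ => (P.X.map_comp _ _).symm.trans
          ((congrArg P.X.map (Subsingleton.elim _ _)).trans (P.X.map_comp _ _)) } hid
  refine ⟨P.restrict s, homOfFunctorEq (M := P.restrict s) σ hX, restrictHom f s,
    gammaNeg_homOfFunctorEq hσ hX, fun (k k' : Fin (l + 1)) hkk' => ?_,
    Subtype.ext (ChainHom.ext_eqToHom hfiber fun (i : Fin (P.n + 1)) => ?_)⟩
  · have hσsk := hδ ((hf (s k)).trans (hkk'.trans (hf (s k')).symm))
    rwa [hσs, hσs] at hσsk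
  · obtain ⟨_, he⟩ := hid i
    have hnat : P.X.map (homOfLE (hsσ i)) ≫ f.1.θ i = f.1.θ (s (σ i)) ≫ _ :=
      f.1.natural (hsσ i)
    rw [he, map_homOfLE_of_eq _ _ (hfiber i)] at hnat
    refine ((eqToHom_comp_iff _ _ _).mp hnat).trans ?_
    exact (Category.assoc _ _ _).symm.trans
      (congrArg (· ≫ _) (congrArg (· ≫ f.1.θ (s (σ i))) (eqToHom_app hX.symm i).symm))

theorem gammaNeg_gammaPos_factorization_unique {P Q M₁ M₂ : NegObj R}
    {g₁ : P ⟶ M₁} {h₁ : M₁ ⟶ Q} {g₂ : P ⟶ M₂} {h₂ : M₂ ⟶ Q}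
    (hg₁ : GammaNeg R g₁) (hh₁ : GammaPos R h₁) (hg₂ : GammaNeg R g₂) (hh₂ : GammaPos R h₂)
    (h : g₁ ≫ h₁ = g₂ ≫ h₂) :
    (⟨M₁, g₁, h₁⟩ : Σ M : NegObj R, (P ⟶ M) × (M ⟶ Q)) = ⟨M₂, g₂, h₂⟩ := by
  obtain ⟨hn, hσ⟩ := surjective_strictMono_factorization_unique hg₁.1
    (h₁.1.α.monotone.strictMono_of_injective hh₁) hg₂.1
    (h₂.1.α.monotone.strictMono_of_injective hh₂) fun i => congrArg (fun w => w.1.α i) h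
  obtain ⟨rfl, hg⟩ := Sigma.mk.inj_iff.mp (GammaNeg.sigma_eq_of_α_eq hg₁ hg₂ hn hσ)
  obtain rfl := eq_of_heq hg
  obtain rfl := hg₁.epi.left_cancellation h₁ h₂ h
  rfl

section Statements

variable (R : ReedyStruct C)

theorem statement9 {P Q : NegObj R} (f : P ⟶ Q) :
    ∃! t : Σ M : NegObj R, (P ⟶ M) × (M ⟶ Q),
      GammaNeg R t.2.1 ∧ GammaPos R t.2.2 ∧ t.2.1 ≫ t.2.2 = f := by
  obtain ⟨M, g, h, hg, hh, hgh⟩ := exists_gammaNeg_gammaPos_factorization f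
  refine ⟨⟨M, g, h⟩, ⟨hg, hh, hgh⟩, ?_⟩
  rintro ⟨M', g', h'⟩ ⟨hg', hh', hgh'⟩
  exact gammaNeg_gammaPos_factorization_unique hg' hh' hg hh (hgh'.trans hgh.symm)

end Statements

end ReedyPaper
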